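/- Let n be a nonnegative integer, I a nontrivial interval of ℝ, f : I → ℝ a C^n function, and p ∈ I. For k = 0,…,n write P_k for the platform of D^k f containing p. Then P_0 ⊆ P_1 ⊆ ⋯ ⊆ P_n; more precisely, there is an initial segment A ⊆ {0,…,n} and a closed subinterval P of I of positive length such that P_k = {p} for k ∈ A and P_k = P for k ∉ A. -/

import Mathlib

open Set MeasureTheory

/-- `K` is closed and discrete in `I`: every point of `I` has a punctured
neighborhood missing `K`. -/
def ClosedDiscreteIn (K I : Set ℝ) : Prop :=
  K ⊆ I ∧ ∀ x ∈ I, ∃ ε > 0, ∀ y ∈ K, |y - x| < ε → y = x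

/-- `f` is (non-strictly) monotone on `S`. -/
def MonoOn (f : ℝ → ℝ) (S : Set ℝ) : Prop :=
  MonotoneOn f S ∨ AntitoneOn f S

/-- `K` witnesses the piecewise monotonicity of `f` on `I`. -/
def Witnesses (f : ℝ → ℝ) (I K : Set ℝ) : Prop :=
  ClosedDiscreteIn K I ∧
    ∀ x ∈ I \ K, MonoOn f (connectedComponentIn (I \ K) x)

/-- `f` is piecewise monotone on `I`. -/
def PiecewiseMonotoneOn (f : ℝ → ℝ) (I : Set ℝ) : Prop :=
  ∃ K, Witnesses f I K

/-- The platform of `f` containing `p`: the connected component of the fiber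
of `f` (within `I`) containing `p`. -/
def Platform (f : ℝ → ℝ) (I : Set ℝ) (p : ℝ) : Set ℝ :=
  connectedComponentIn {x ∈ I | f x = f p} p

/-- `P` is a platform of `f` on `I`. -/
def IsPlatform (f : ℝ → ℝ) (I P : Set ℝ) : Prop :=
  ∃ p ∈ I, P = Platform f I p

/-- `P` is a turning platform of `f` on `I`. -/
def IsTurningPlatform (f : ℝ → ℝ) (I P : Set ℝ) : Prop :=
  IsPlatform f I P ∧
  ∃ a b c ε, a ≤ b ∧ P = Icc a b ∧ (∀ x ∈ P, f x = c) ∧ 0 < ε ∧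
    Ioo (a - ε) (b + ε) ⊆ I ∧
    ((∀ x ∈ Ioo (a - ε) (b + ε) \ P, c < f x) ∨
     (∀ x ∈ Ioo (a - ε) (b + ε) \ P, f x < c))

/-- `x` is a turning point of `f` on `I`. -/
def IsTurningPoint (f : ℝ → ℝ) (I : Set ℝ) (x : ℝ) : Prop :=
  ∃ P, IsTurningPlatform f I P ∧ x ∈ P

/-!
On a nontrivial interval of constancy of `g`, the derivative of `g` vanishes, so the platform
of `g` at `p` lies in the platform of `g'` at `p`. If that interval is nontrivial, `g' p = 0`,
so `g'` vanishes on its own platform at `p`; by the mean value theorem `g` is constant there,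
and the two platforms coincide. Hence along `f, f', …, f⁽ⁿ⁾` the platforms at `p` are `{p}` until the
first nontrivial one, and constant from then on.
-/

section Platform

variable {g : ℝ → ℝ} {I : Set ℝ} {p : ℝ}

theorem mem_platform_self (hp : p ∈ I) : p ∈ Platform g I p :=
  mem_connectedComponentIn ⟨hp, rfl⟩

theorem platform_subset : Platform g I p ⊆ I :=
  (connectedComponentIn_subset _ _).trans (sep_subset _ _)

theorem apply_eq_of_mem_platform {x : ℝ} (hx : x ∈ Platform g I p) : g x = g p :=
  (connectedComponentIn_subset _ _ hx).2

theorem ordConnected_platform : (Platform g I p).OrdConnected :=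
  isPreconnected_connectedComponentIn.ordConnected

theorem subset_platform {S : Set ℝ} (hS : IsPreconnected S) (hpS : p ∈ S) (hSI : S ⊆ I)
    (hg : ∀ x ∈ S, g x = g p) : S ⊆ Platform g I p :=
  hS.subset_connectedComponentIn hpS fun x hx => ⟨hSI hx, hg x hx⟩

theorem platform_eq_singleton (hp : p ∈ I) (h : ¬(Platform g I p).Nontrivial) :
    Platform g I p = {p} :=
  (not_nontrivial_iff.mp h).eq_singleton_of_mem (mem_platform_self hp)

end Platform

theorem derivWithin_eq_zero_of_forall_eq {𝕜 F : Type*} [NontriviallyNormedField 𝕜]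
    [NormedAddCommGroup F] [NormedSpace 𝕜 F] {g : 𝕜 → F} {I S : Set 𝕜} {x : 𝕜}
    (hg : DifferentiableWithinAt 𝕜 g I x) (hSI : S ⊆ I) (hS : UniqueDiffWithinAt 𝕜 S x)
    (hc : ∀ y ∈ S, g y = g x) : derivWithin g I x = 0 := by
  rw [← derivWithin_subset hSI hS hg, derivWithin_congr hc rfl, derivWithin_fun_const, Pi.zero_apply]

theorem Convex.is_const_of_derivWithin_eq_zero_of_subset {F : Type*} [NormedAddCommGroup F]
    [NormedSpace ℝ F] {g : ℝ → F} {I S : Set ℝ} (hS : Convex ℝ S) (hSI : S ⊆ I)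
    (hg : ∀ x ∈ S, DifferentiableWithinAt ℝ g I x) (h0 : ∀ x ∈ S, derivWithin g I x = 0)
    {x y : ℝ} (hx : x ∈ S) (hy : y ∈ S) : g x = g y := by
  have hderiv : ∀ z ∈ S, HasDerivWithinAt g 0 S z := fun z hz => by
    simpa only [h0 z hz] using ((hg z hz).hasDerivWithinAt.mono hSI)
  have hle := hS.norm_image_sub_le_of_norm_hasDerivWithin_le hderiv (C := 0)
    (fun _ _ => norm_zero.le) hy hx
  rw [zero_mul, norm_le_zero_iff, sub_eq_zero] at hle
  exact hle

section DerivWithin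

variable {g : ℝ → ℝ} {I : Set ℝ} {p : ℝ}

theorem derivWithin_eq_zero_of_mem_platform (hg : DifferentiableOn ℝ g I)
    (h : (Platform g I p).Nontrivial) {x : ℝ} (hx : x ∈ Platform g I p) :
    derivWithin g I x = 0 := by
  have hUD : UniqueDiffOn ℝ (Platform g I p) := uniqueDiffOn_convex ordConnected_platform.convex
    (ordConnected_platform.convex.nontrivial_iff_nonempty_interior.1 h)
  refine derivWithin_eq_zero_of_forall_eq (hg x (platform_subset hx)) platform_subset
    (hUD x hx) fun y hy => ?_
  rw [apply_eq_of_mem_platform hy, apply_eq_of_mem_platform hx]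

theorem platform_subset_platform_derivWithin (hg : DifferentiableOn ℝ g I) (hp : p ∈ I) :
    Platform g I p ⊆ Platform (derivWithin g I) I p := by
  by_cases h : (Platform g I p).Nontrivial
  · refine subset_platform isPreconnected_connectedComponentIn (mem_platform_self hp)
      platform_subset fun x hx => ?_
    rw [derivWithin_eq_zero_of_mem_platform hg h hx,
      derivWithin_eq_zero_of_mem_platform hg h (mem_platform_self hp)]
  · rw [platform_eq_singleton hp h]
    exact singleton_subset_iff.mpr (mem_platform_self hp)

theorem platform_derivWithin_eq_of_nontrivial (hg : DifferentiableOn ℝ g I)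
    (h : (Platform g I p).Nontrivial) : Platform (derivWithin g I) I p = Platform g I p := by
  have hp : p ∈ I := by
    obtain ⟨x, hx⟩ := h.nonempty
    exact connectedComponentIn_nonempty_iff.mp ⟨x, hx⟩ |>.1
  refine (subset_platform isPreconnected_connectedComponentIn (mem_platform_self hp)
    platform_subset fun x hx => ?_).antisymm (platform_subset_platform_derivWithin hg hp)
  have h0 : ∀ y ∈ Platform (derivWithin g I) I p, derivWithin g I y = 0 := fun y hy => by
    rw [apply_eq_of_mem_platform hy,
      derivWithin_eq_zero_of_mem_platform hg h (mem_platform_self hp)]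
  exact ordConnected_platform.convex.is_const_of_derivWithin_eq_zero_of_subset platform_subset
    (fun y hy => hg y (platform_subset hy)) h0 hx (mem_platform_self hp)

end DerivWithin

theorem exists_first_nontrivial_of_stable {α : Type*} (S : ℕ → Set α) (n : ℕ)
    (hS : ∀ k < n, (S k).Nontrivial → S (k + 1) = S k) :
    ∃ m ≤ n + 1, (∀ k < m, ¬(S k).Nontrivial) ∧
      (m ≤ n → (S m).Nontrivial ∧ ∀ k, m ≤ k → k ≤ n → S k = S m) := by
  classical
  by_cases hex : ∃ k, k ≤ n ∧ (S k).Nontrivial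
  · obtain ⟨hmn, hm⟩ := Nat.find_spec hex
    refine ⟨Nat.find hex, by omega, fun k hk hk' => Nat.find_min hex hk ⟨by omega, hk'⟩,
      fun _ => ⟨hm, fun k hmk => ?_⟩⟩
    induction k, hmk using Nat.le_induction with
    | base => exact fun _ => rfl
    | succ k hmk ih =>
      intro hkn
      have hk : S k = S (Nat.find hex) := ih (by omega)
      rw [hS k (by omega) (hk ▸ hm), hk]
  · exact ⟨n + 1, le_rfl, fun k hk h => hex ⟨k, by omega, h⟩, fun h => absurd h (by omega)⟩

/-- The platforms of the successive derivatives of a `C^n` function at a point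
form an increasing chain: they are `{p}` on an initial segment and equal to a
fixed closed subinterval `P` of positive length afterwards. -/
theorem platforms_of_derivatives_chain
    (n : ℕ) (I : Set ℝ) (hI : I.OrdConnected) (hnt : I.Nontrivial)
    (f : ℝ → ℝ) (hf : ContDiffOn ℝ n f I) (p : ℝ) (hp : p ∈ I) :
    (∀ k < n, Platform (iteratedDerivWithin k f I) I p ⊆
      Platform (iteratedDerivWithin (k + 1) f I) I p) ∧
    ∃ m ≤ n + 1,
      (∀ k < m, Platform (iteratedDerivWithin k f I) I p = {p}) ∧
      (m ≤ n → ∃ P, P ⊆ I ∧ P.OrdConnected ∧ P.Nontrivial ∧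
        ∀ k, m ≤ k → k ≤ n → Platform (iteratedDerivWithin k f I) I p = P) := by
  have hUD : UniqueDiffOn ℝ I :=
    uniqueDiffOn_convex hI.convex (hI.convex.nontrivial_iff_nonempty_interior.1 hnt)
  have hdiff : ∀ k < n, DifferentiableOn ℝ (iteratedDerivWithin k f I) I := fun k hk =>
    hf.differentiableOn_iteratedDerivWithin (by exact_mod_cast hk) hUD
  obtain ⟨m, hmn, htriv, hstable⟩ :=
    exists_first_nontrivial_of_stable (fun k => Platform (iteratedDerivWithin k f I) I p) n
      fun k hk h => by
        rw [iteratedDerivWithin_succ]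
        exact platform_derivWithin_eq_of_nontrivial (hdiff k hk) h
  refine ⟨fun k hk => ?_, m, hmn, fun k hk => platform_eq_singleton hp (htriv k hk), fun hm => ?_⟩
  · rw [iteratedDerivWithin_succ]
    exact platform_subset_platform_derivWithin (hdiff k hk) hp
  · obtain ⟨hPnt, hPeq⟩ := hstable hm
    exact ⟨_, platform_subset, ordConnected_platform, hPnt, hPeq⟩
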